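/- Let C_GW.2 be the class of all Kripke models whose frame consists of exactly two worlds a, b with accessibility relation R = {(a,a),(b,b),(a,b)}. Then C_GW.2 enjoys 2-IP. -/

import Mathlib

/-- Modal formulas over countably many variables. -/
inductive ModalForm : Type where
  | var : ℕ → ModalForm
  | bot : ModalForm
  | and : ModalForm → ModalForm → ModalForm
  | or : ModalForm → ModalForm → ModalForm
  | not : ModalForm → ModalForm
  | imp : ModalForm → ModalForm → ModalForm
  | box : ModalForm → ModalForm

namespace ModalForm

mutual
  /-- positively occurring variables -/
  def vpos : ModalForm → Finset ℕ
    | var p => {p}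
    | bot => ∅
    | and φ ψ => vpos φ ∪ vpos ψ
    | or φ ψ => vpos φ ∪ vpos ψ
    | not φ => vneg φ
    | imp φ ψ => vneg φ ∪ vpos ψ
    | box φ => vpos φ
  /-- negatively occurring variables -/
  def vneg : ModalForm → Finset ℕ
    | var _ => ∅
    | bot => ∅
    | and φ ψ => vneg φ ∪ vneg ψ
    | or φ ψ => vneg φ ∪ vneg ψ
    | not φ => vpos φ
    | imp φ ψ => vpos φ ∪ vneg ψ
    | box φ => vneg φ
end

/-- Modal depth: maximal nesting of `□`. -/
def depth : ModalForm → ℕ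
  | var _ => 0
  | bot => 0
  | and φ ψ => max (depth φ) (depth ψ)
  | or φ ψ => max (depth φ) (depth ψ)
  | not φ => depth φ
  | imp φ ψ => max (depth φ) (depth ψ)
  | box φ => depth φ + 1

/-- `◇φ := ¬□¬φ` -/
def dia (φ : ModalForm) : ModalForm := not (box (not φ))

/-- `⊤ := ¬⊥` -/
def top : ModalForm := not bot

end ModalForm

/-- An S4 Kripke frame: nonempty set of worlds with a reflexive transitive relation. -/
structure KFrame : Type 1 where
  W : Type
  R : W → W → Prop
  nonempty : Nonempty W
  refl : ∀ x, R x x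
  trans : ∀ x y z, R x y → R y z → R x z

/-- A Kripke model: a frame with a valuation. -/
structure KModel : Type 1 extends KFrame where
  val : W → ℕ → Prop

/-- The model based on frame `F` with valuation `V`. -/
def KFrame.toModel (F : KFrame) (V : F.W → ℕ → Prop) : KModel :=
  { toKFrame := F, val := V }

/-- Satisfaction in a Kripke model. -/
def KModel.Sat (M : KModel) : M.W → ModalForm → Prop
  | w, .var p => M.val w p
  | _, .bot => False
  | w, .and φ ψ => M.Sat w φ ∧ M.Sat w ψ
  | w, .or φ ψ => M.Sat w φ ∨ M.Sat w ψ
  | w, .not φ => ¬ M.Sat w φ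
  | w, .imp φ ψ => M.Sat w φ → M.Sat w ψ
  | w, .box φ => ∀ y, M.R w y → M.Sat y φ

/-- `(M0,w0) →ₙ^{(P⁺,P⁻)} (M1,w1)`: every `(P⁺,P⁻)`-formula of depth ≤ n
satisfied at `(M0,w0)` is satisfied at `(M1,w1)`. -/
def ModalArrow (Pp Pm : Finset ℕ) (n : ℕ) (M0 : KModel) (w0 : M0.W)
    (M1 : KModel) (w1 : M1.W) : Prop :=
  ∀ φ : ModalForm, φ.vpos ⊆ Pp → φ.vneg ⊆ Pm → φ.depth ≤ n →
    M0.Sat w0 φ → M1.Sat w1 φ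

/-- p-morphism between frames. -/
def PMorphism (F G : KFrame) (f : F.W → G.W) : Prop :=
  (∀ x y, F.R x y → G.R (f x) (f y)) ∧
  (∀ x w, G.R (f x) w → ∃ z, F.R x z ∧ f z = w)

/-- The class `C` of Kripke models enjoys `n`-IP. -/
def EnjoysIP (C : Set KModel) (n : ℕ) : Prop :=
  ∀ (Pp Pm : Finset ℕ) (M0 M1 : KModel), M0 ∈ C → M1 ∈ C →
    ∀ (w0 : M0.W) (w1 : M1.W), ModalArrow Pp Pm n M0 w0 M1 w1 →
      ∃ (F : KFrame) (wstar : F.W) (f0 : F.W → M0.W) (f1 : F.W → M1.W),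
        (∀ V : F.W → ℕ → Prop, F.toModel V ∈ C) ∧
        PMorphism F M0.toKFrame f0 ∧
        PMorphism F M1.toKFrame f1 ∧
        f0 wstar = w0 ∧ f1 wstar = w1 ∧
        ∀ x : F.W, ModalArrow Pp Pm 0 M0 (f0 x) M1 (f1 x)

/-- A world is final iff every successor is also a predecessor. -/
def KModel.Final (M : KModel) (w : M.W) : Prop := ∀ y, M.R w y → M.R y w

/-- The cluster of a world. -/
def KModel.cluster (M : KModel) (w : M.W) : Set M.W := {u | M.R w u ∧ M.R u w}

/-- Cluster `C0` of `M0` matches cluster `C1` of `M1`. -/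
def Matches (Pp Pm : Finset ℕ) (M0 M1 : KModel) (C0 : Set M0.W) (C1 : Set M1.W) : Prop :=
  (∀ u0 ∈ C0, ∃ u1 ∈ C1, ModalArrow Pp Pm 0 M0 u0 M1 u1) ∧
  (∀ u1 ∈ C1, ∃ u0 ∈ C0, ModalArrow Pp Pm 0 M0 u0 M1 u1)

/-- `φ` is satisfied at every world of every model in `C`. -/
def ValidOn (C : Set KModel) (φ : ModalForm) : Prop :=
  ∀ M ∈ C, ∀ w : M.W, M.Sat w φ

/-- The class of GW.2 models: exactly two worlds `a ≠ b` with
`R = {(a,a),(b,b),(a,b)}`. -/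
def C_GW2 : Set KModel :=
  {M | ∃ a b : M.W, a ≠ b ∧ (∀ w : M.W, w = a ∨ w = b) ∧
    ∀ u v : M.W, M.R u v ↔
      ((u = a ∧ v = a) ∨ (u = b ∧ v = b) ∨ (u = a ∧ v = b))}

/-!
In a GW.2 model with top world `b` the accessibility relation is `u = v ∨ v = b`, so for
every world `w` the two-element chain `false < true`, mapped to `w` and `b`, is a p-morphism
onto the model; it serves as the common frame for both sides. The depth-0 condition
at `(w0, w1)` is inherited from the depth-2 one; at the top worlds it follows from the formulas
`◇□p` and `◇□¬p`, which hold at `w` exactly when `p`, resp. `¬p`, holds at the top world.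
-/

open ModalForm

theorem KModel.sat_of_depth_eq_zero {φ : ModalForm} (hd : φ.depth = 0) :
    ∀ {Pp Pm : Finset ℕ} {M0 M1 : KModel} {u0 : M0.W} {u1 : M1.W},
      φ.vpos ⊆ Pp → φ.vneg ⊆ Pm →
      (∀ p ∈ Pp, M0.val u0 p → M1.val u1 p) → (∀ p ∈ Pm, M1.val u1 p → M0.val u0 p) →
      M0.Sat u0 φ → M1.Sat u1 φ := by
  -- `not` and the antecedent of `imp` swap the two models and `Pp` with `Pm`,
  -- which is why everything but `φ` is quantified after the colon.
  induction φ with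
  | var p =>
    intro _ _ _ _ _ _ hp _ hpos _ hs
    exact hpos p (hp (Finset.mem_singleton_self p)) hs
  | bot => intro _ _ _ _ _ _ _ _ _ _ hs; exact hs.elim
  | and φ ψ ihφ ihψ =>
    simp only [depth, Nat.max_eq_zero_iff] at hd
    intro _ _ _ _ _ _ hp hm hpos hneg hs
    simp only [vpos, vneg, Finset.union_subset_iff] at hp hm
    exact ⟨ihφ hd.1 hp.1 hm.1 hpos hneg hs.1, ihψ hd.2 hp.2 hm.2 hpos hneg hs.2⟩
  | or φ ψ ihφ ihψ =>
    simp only [depth, Nat.max_eq_zero_iff] at hd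
    intro _ _ _ _ _ _ hp hm hpos hneg hs
    simp only [vpos, vneg, Finset.union_subset_iff] at hp hm
    exact hs.imp (ihφ hd.1 hp.1 hm.1 hpos hneg) (ihψ hd.2 hp.2 hm.2 hpos hneg)
  | not φ ihφ =>
    intro _ _ _ _ _ _ hp hm hpos hneg hs hc
    exact hs (ihφ hd hm hp hneg hpos hc)
  | imp φ ψ ihφ ihψ =>
    simp only [depth, Nat.max_eq_zero_iff] at hd
    intro _ _ _ _ _ _ hp hm hpos hneg hs hc
    simp only [vpos, vneg, Finset.union_subset_iff] at hp hm
    exact ihψ hd.2 hp.2 hm.2 hpos hneg (hs (ihφ hd.1 hm.1 hp.1 hneg hpos hc))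
  | box φ _ => exact absurd hd (Nat.succ_ne_zero _)

theorem ModalArrow.zero_of_val {Pp Pm : Finset ℕ} {M0 M1 : KModel} {u0 : M0.W} {u1 : M1.W}
    (hpos : ∀ p ∈ Pp, M0.val u0 p → M1.val u1 p) (hneg : ∀ p ∈ Pm, M1.val u1 p → M0.val u0 p) :
    ModalArrow Pp Pm 0 M0 u0 M1 u1 :=
  fun _ hp hm hd => KModel.sat_of_depth_eq_zero (Nat.le_zero.mp hd) hp hm hpos hneg

theorem ModalArrow.mono {Pp Pm : Finset ℕ} {m n : ℕ} {M0 M1 : KModel} {u0 : M0.W} {u1 : M1.W}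
    (H : ModalArrow Pp Pm n M0 u0 M1 u1) (hmn : m ≤ n) : ModalArrow Pp Pm m M0 u0 M1 u1 :=
  fun φ hp hm hd => H φ hp hm (hd.trans hmn)

theorem KModel.sat_dia_box_of_sat_endpoint {M : KModel} {w b : M.W} {φ : ModalForm}
    (hwb : M.R w b) (hb : ∀ z, M.R b z → z = b) (h : M.Sat b φ) :
    M.Sat w (dia (box φ)) :=
  fun hnot => hnot b hwb fun z hz => (hb z hz) ▸ h

theorem KModel.sat_of_sat_dia_box {M : KModel} {w b : M.W} {φ : ModalForm}
    (hb : ∀ y, M.R w y → M.R y b) (h : M.Sat w (dia (box φ))) : M.Sat b φ :=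
  Classical.byContradiction fun hnb => h fun y hy hyφ => hnb (hyφ b (hb y hy))

theorem ModalArrow.zero_of_endpoint {Pp Pm : Finset ℕ} {M0 M1 : KModel} {w0 b0 : M0.W}
    {w1 b1 : M1.W} (H : ModalArrow Pp Pm 2 M0 w0 M1 w1) (hwb0 : M0.R w0 b0)
    (hb0 : ∀ z, M0.R b0 z → z = b0) (hb1 : ∀ y, M1.R w1 y → M1.R y b1) :
    ModalArrow Pp Pm 0 M0 b0 M1 b1 := by
  refine ModalArrow.zero_of_val (fun p hp hv => ?_) (fun p hp hv => ?_)
  · refine KModel.sat_of_sat_dia_box (φ := var p) hb1 (H _ ?_ ?_ ?_ ?_)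
    · simpa [dia, vpos, vneg] using hp
    · simp [dia, vpos, vneg]
    · simp [dia, depth]
    · exact KModel.sat_dia_box_of_sat_endpoint hwb0 hb0 hv
  · by_contra hnv
    refine KModel.sat_of_sat_dia_box (φ := not (var p)) hb1 (H _ ?_ ?_ ?_ ?_) hv
    · simp [dia, vpos, vneg]
    · simpa [dia, vpos, vneg] using hp
    · simp [dia, depth]
    · exact KModel.sat_dia_box_of_sat_endpoint hwb0 hb0 hnv

theorem exists_top_of_mem_C_GW2 {M : KModel} (hM : M ∈ C_GW2) :
    ∃ b : M.W, ∀ u v, M.R u v ↔ u = v ∨ v = b := by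
  obtain ⟨a, b, hab, hall, hR⟩ := hM
  refine ⟨b, fun u v => (hR u v).trans ?_⟩
  rcases hall u with rfl | rfl <;> rcases hall v with rfl | rfl <;> simp [hab, hab.symm]

def twoChain : KFrame where
  W := Bool
  R x y := x = y ∨ y = true
  nonempty := ⟨false⟩
  refl _ := Or.inl rfl
  trans := by decide

theorem twoChain_toModel_mem_C_GW2 (V : twoChain.W → ℕ → Prop) : twoChain.toModel V ∈ C_GW2 :=
  ⟨false, true, Bool.false_ne_true, fun w => (Bool.eq_false_or_eq_true w).symm, by
    rintro (_ | _) (_ | _) <;> simp [KFrame.toModel, twoChain]⟩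

theorem pMorphism_twoChain {G : KFrame} {b : G.W} (hR : ∀ u v, G.R u v ↔ u = v ∨ v = b)
    (w : G.W) : PMorphism twoChain G (fun x => cond x b w) := by
  constructor
  · rintro x y (rfl | rfl)
    · exact G.refl _
    · exact (hR _ b).2 (Or.inr rfl)
  · rintro (_ | _) u hu <;> rcases (hR _ u).1 hu with rfl | rfl
    · exact ⟨false, Or.inl rfl, rfl⟩
    · exact ⟨true, Or.inr rfl, rfl⟩
    · exact ⟨true, Or.inl rfl, rfl⟩
    · exact ⟨true, Or.inl rfl, rfl⟩

theorem stmt9 : EnjoysIP C_GW2 2 := by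
  intro Pp Pm M0 M1 hM0 hM1 w0 w1 H
  obtain ⟨b0, hR0⟩ := exists_top_of_mem_C_GW2 hM0
  obtain ⟨b1, hR1⟩ := exists_top_of_mem_C_GW2 hM1
  refine ⟨twoChain, false, fun x => cond x b0 w0, fun x => cond x b1 w1,
    twoChain_toModel_mem_C_GW2, pMorphism_twoChain hR0 w0, pMorphism_twoChain hR1 w1,
    rfl, rfl, ?_⟩
  rintro (_ | _)
  · exact H.mono (Nat.zero_le 2)
  · refine H.zero_of_endpoint ((hR0 w0 b0).2 (Or.inr rfl)) (fun z hz => ?_)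
      (fun y _ => (hR1 y b1).2 (Or.inr rfl))
    exact ((hR0 b0 z).1 hz).elim Eq.symm id
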